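/- Let n ≥ 2 and let λ_1 ≤ … ≤ λ_n be real numbers, and suppose λ_i < λ_{i+1} for some i ∈ {1,…,n−1}. Then for every τ ∈ ℝ, the set V_τ = { ξ ∈ ℝ^n \ {0} : t_i(ξ) = τ } has n-dimensional Lebesgue measure zero, where t_i(ξ) denotes the i-th smallest root (with multiplicity) of the polynomial I_ξ(t). -/

import Mathlib

/-!
Let `S` be the set of distinct values among the `λ_j` and `m_ν` the multiplicity of `ν ∈ S`.
Then `I_ξ = ∏_{ν ∈ S} (ν - t)^(m_ν - 1) · g_ξ` with `g_ξ = Σ_j ξ_j² ∏_{ν ∈ S, ν ≠ λ_j} (ν - t)`.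
If no `ξ_j` vanishes, `g_ξ(ν)` has the sign `(-1)^#{x ∈ S | x < ν}` for `ν ∈ S`, so `g_ξ` has a root
between any two consecutive points of `S`. Counting these roots together with the repeated ones,
and using `deg I_ξ ≤ n - 1`, `I_ξ` has at least `i + 1` roots below `λ_{i+1}` and at least
`n - 1 - i` roots above `λ_i` (indices from `0`), so `λ_i < t_i(ξ) < λ_{i+1}`.
Hence, off the coordinate hyperplanes, `t_i(ξ) = τ` forces `τ` into that open gap and
`I_ξ(τ) = Σ_j Π_j(τ) ξ_j² = 0`, a quadric whose coefficients `Π_j(τ)` are all nonzero.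
Such a quadric is null by Fubini: it meets each line parallel to a coordinate axis
in at most two points.
-/

open Polynomial MeasureTheory Finset

/-- `Π_i(t) = ∏_{j ≠ i} (λ_j − t)` as a real polynomial in `t`. -/
noncomputable def PiPoly (n : ℕ) (lam : Fin n → ℝ) (i : Fin n) : Polynomial ℝ :=
  ∏ j ∈ Finset.univ.erase i, (C (lam j) - X)

/-- `I_ξ(t) = Σ_{i=1}^n ξ_i² Π_i(t)` as a real polynomial in `t`. -/
noncomputable def IPoly (n : ℕ) (lam : Fin n → ℝ) (ξ : Fin n → ℝ) : Polynomial ℝ :=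
  ∑ i, C ((ξ i) ^ 2) * PiPoly n lam i

lemma Multiset.countP_le_countP_of_imp {α : Type*} {P Q : α → Prop} [DecidablePred P]
    [DecidablePred Q] {s : Multiset α} (hPQ : ∀ x, P x → Q x) : s.countP P ≤ s.countP Q := by
  simp only [Multiset.countP_eq_card_filter]
  exact Multiset.card_le_card (Multiset.monotone_filter_right s hPQ)

lemma Multiset.countP_lt_countP_of_imp {α : Type*} {P Q : α → Prop} [DecidablePred P]
    [DecidablePred Q] {s : Multiset α} (hPQ : ∀ x, P x → Q x) {r : α} (hr : r ∈ s) (hQr : Q r)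
    (hPr : ¬ P r) : s.countP P < s.countP Q := by
  simp only [Multiset.countP_eq_card_filter]
  refine Multiset.card_lt_card (lt_of_le_of_ne (Multiset.monotone_filter_right s hPQ) fun h => ?_)
  have hrQ : r ∈ s.filter Q := Multiset.mem_filter.mpr ⟨hr, hQr⟩
  rw [← h] at hrQ
  exact hPr (Multiset.mem_filter.mp hrQ).2

section SortedList

variable {α : Type*} [LinearOrder α] {l : List α} {i : ℕ}

lemma List.Pairwise.le_of_mem_drop (hl : l.Pairwise (· ≤ ·)) (hi : i < l.length) {x : α}
    (hx : x ∈ l.drop i) : l[i] ≤ x := by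
  have hdrop := hl.sublist (List.drop_sublist i l)
  rw [List.drop_eq_getElem_cons hi] at hdrop hx
  rcases List.mem_cons.mp hx with rfl | hx
  exacts [le_rfl, List.rel_of_pairwise_cons hdrop hx]

lemma List.Pairwise.countP_lt_getElem_le (hl : l.Pairwise (· ≤ ·)) (hi : i < l.length) :
    l.countP (· < l[i]) ≤ i := by
  calc l.countP (· < l[i])
      = (l.take i).countP (· < l[i]) + (l.drop i).countP (· < l[i]) := by
        rw [← List.countP_append, List.take_append_drop]
    _ ≤ i + 0 := by
        gcongr
        · exact List.countP_le_length.trans (List.length_take_le _ _)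
        · exact (List.countP_eq_zero.mpr fun x hx => by simpa using hl.le_of_mem_drop hi hx).le

lemma List.Pairwise.lt_countP_le_getElem (hl : l.Pairwise (· ≤ ·)) (hi : i < l.length) :
    i < l.countP (· ≤ l[i]) := by
  have htake : ∀ x ∈ l.take (i + 1), x ≤ l[i] := by
    intro x hx
    obtain ⟨k, hk, rfl⟩ := List.mem_iff_getElem.mp hx
    simp only [List.getElem_take, List.length_take] at hk ⊢
    rcases (Nat.lt_succ_iff.mp (lt_min_iff.mp hk).1).lt_or_eq with h | rfl
    exacts [List.pairwise_iff_getElem.mp hl _ _ _ hi h, le_rfl]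
  have hcount : (l.take (i + 1)).countP (· ≤ l[i]) = i + 1 := by
    rw [List.countP_eq_length.mpr (by simpa using htake), List.length_take]; omega
  have := (List.take_sublist (i + 1) l).countP_le (p := (· ≤ l[i]))
  omega

end SortedList

lemma Multiset.sort_getD_mem_Ioo {α : Type*} [LinearOrder α] {R : Multiset α} {c d x₀ : α}
    {i : ℕ} (hc : R.countP (· ≤ c) ≤ i) (hd : i < R.countP (· < d)) :
    (R.sort (· ≤ ·)).getD i x₀ ∈ R ∧ (R.sort (· ≤ ·)).getD i x₀ ∈ Set.Ioo c d := by
  set l := R.sort (· ≤ ·)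
  have hsorted : l.Pairwise (· ≤ ·) := Multiset.pairwise_sort _ _
  have hR : R = (l : Multiset α) := (Multiset.sort_eq R _).symm
  rw [hR, Multiset.coe_countP] at hc hd
  have hi : i < l.length := hd.trans_le List.countP_le_length
  rw [List.getD_eq_getElem _ _ hi]
  refine ⟨(Multiset.mem_sort _).mp (List.getElem_mem hi), ?_, ?_⟩
  · by_contra! h
    have := (hsorted.lt_countP_le_getElem hi).trans_le (List.countP_mono_left (q := (· ≤ c))
      fun x _ hx => by simp only [decide_eq_true_eq] at hx ⊢; exact hx.trans h)
    omega
  · by_contra! h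
    have := (List.countP_mono_left (p := (· < d)) (q := (· < l[i])) fun x _ hx => by
      simp only [decide_eq_true_eq] at hx ⊢; exact hx.trans_le h).trans
      (hsorted.countP_lt_getElem_le hi)
    omega

lemma card_filter_lt_eq_card_filter_Ioc_min' {α : Type*} [LinearOrder α] {S : Finset α} {d : α}
    (hd : d ∈ S) : #{x ∈ S | x < d} = #{x ∈ S | S.min' ⟨d, hd⟩ < x ∧ x ≤ d} := by
  set a := S.min' ⟨d, hd⟩
  have h1 : {x ∈ S | x ≤ d} = insert d {x ∈ S | x < d} := by
    ext x
    simp only [mem_filter, mem_insert]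
    constructor
    · rintro ⟨hx, hxd⟩
      rcases hxd.lt_or_eq with h | h
      exacts [Or.inr ⟨hx, h⟩, Or.inl h]
    · rintro (rfl | ⟨hx, hxd⟩)
      exacts [⟨hd, le_rfl⟩, ⟨hx, hxd.le⟩]
  have h2 : {x ∈ S | x ≤ d} = insert a {x ∈ S | a < x ∧ x ≤ d} := by
    ext x
    simp only [mem_filter, mem_insert]
    constructor
    · rintro ⟨hx, hxd⟩
      rcases (min'_le S x hx).lt_or_eq with h | h
      exacts [Or.inr ⟨hx, h, hxd⟩, Or.inl h.symm]
    · rintro (rfl | ⟨hx, -, hxd⟩)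
      exacts [⟨min'_mem _ _, min'_le S d hd⟩, ⟨hx, hxd⟩]
  have := congrArg card (h1.symm.trans h2)
  rw [card_insert_of_notMem (by simp), card_insert_of_notMem (by simp)] at this
  omega

noncomputable def linearProd (s : Multiset ℝ) : ℝ[X] := (s.map fun x => C x - X).prod

lemma C_sub_X_ne_zero (x : ℝ) : (C x - X : ℝ[X]) ≠ 0 := by
  rw [← neg_sub]; exact neg_ne_zero.mpr (X_sub_C_ne_zero x)

lemma roots_C_sub_X (x : ℝ) : (C x - X : ℝ[X]).roots = {x} := by
  rw [← neg_sub, roots_neg, roots_X_sub_C]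

lemma roots_linearProd (s : Multiset ℝ) : (linearProd s).roots = s := by
  rw [linearProd, roots_multiset_prod _ (by simp [C_sub_X_ne_zero]), Multiset.bind_map]
  simpa [roots_C_sub_X] using Multiset.bind_singleton (s := s) id

lemma linearProd_ne_zero (s : Multiset ℝ) : linearProd s ≠ 0 :=
  Multiset.prod_ne_zero (by simp [C_sub_X_ne_zero])

lemma linearProd_val (T : Finset ℝ) : linearProd T.val = ∏ x ∈ T, (C x - X) :=
  (prod_eq_multiset_prod _ _).symm

lemma linearProd_add (s t : Multiset ℝ) : linearProd (s + t) = linearProd s * linearProd t := by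
  simp [linearProd]

lemma exists_isRoot_mem_Ioo {p : ℝ[X]} {a b : ℝ} (hab : a ≤ b)
    (hsign : p.eval a * p.eval b < 0) : ∃ r ∈ Set.Ioo a b, p.IsRoot r := by
  have h0 : (0 : ℝ) ∈ Set.uIcc (p.eval a) (p.eval b) := by
    rcases mul_neg_iff.mp hsign with h | h
    · exact Set.mem_uIcc.mpr (Or.inr ⟨h.2.le, h.1.le⟩)
    · exact Set.mem_uIcc.mpr (Or.inl ⟨h.1.le, h.2.le⟩)
  obtain ⟨r, hr, hr0⟩ := intermediate_value_uIcc p.continuous.continuousOn h0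
  rw [Set.uIcc_of_le hab] at hr
  have hra : r ≠ a := by rintro rfl; simp [hr0] at hsign
  have hrb : r ≠ b := by rintro rfl; simp [hr0] at hsign
  exact ⟨r, ⟨lt_of_le_of_ne hr.1 hra.symm, lt_of_le_of_ne hr.2 hrb⟩, hr0⟩

lemma neg_one_pow_mul_prod_sub_pos {T : Finset ℝ} {ν : ℝ} (hν : ν ∉ T) :
    0 < (-1) ^ #{x ∈ T | x < ν} * ∏ x ∈ T, (x - ν) := by
  induction T using Finset.induction_on with
  | empty => simp
  | @insert a T haT ih =>
    have hνa : a ≠ ν := fun h => hν (h ▸ mem_insert_self a T)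
    specialize ih fun h => hν (mem_insert_of_mem h)
    rw [filter_insert, prod_insert haT]
    split_ifs with ha
    · rw [card_insert_of_notMem (by simp [haT]), pow_succ]
      nlinarith [sub_neg.mpr ha]
    · have : 0 < a - ν := sub_pos.mpr (lt_of_le_of_ne (not_lt.mp ha) hνa.symm)
      nlinarith

lemma exists_isRoot_mem_Ioo_of_sign {p : ℝ[X]} {S : Finset ℝ}
    (hsign : ∀ ν ∈ S, 0 < (-1) ^ #{x ∈ S | x < ν} * p.eval ν) {μ b : ℝ} (hμ : μ ∈ S)
    (hb : b ∈ S) (hμb : μ < b) (hgap : ∀ x ∈ S, x < b → x ≤ μ) :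
    ∃ r ∈ Set.Ioo μ b, p.IsRoot r := by
  have hbelow : {x ∈ S | x < b} = insert μ {x ∈ S | x < μ} := by
    ext x
    simp only [mem_filter, mem_insert]
    constructor
    · rintro ⟨hx, hxb⟩
      rcases (hgap x hx hxb).lt_or_eq with h | h
      exacts [Or.inr ⟨hx, h⟩, Or.inl h]
    · rintro (rfl | ⟨hx, hxμ⟩)
      exacts [⟨hμ, hμb⟩, ⟨hx, hxμ.trans hμb⟩]
  refine exists_isRoot_mem_Ioo hμb.le ?_
  have hμ := hsign μ hμ
  have hb := hsign b hb
  rw [hbelow, card_insert_of_notMem (by simp), pow_succ] at hb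
  have hsq : ((-1 : ℝ) ^ #{x ∈ S | x < μ}) ^ 2 = 1 := by
    rw [← pow_mul, mul_comm, pow_mul]; norm_num
  nlinarith [mul_pos hμ hb]

lemma card_filter_Ioc_le_countP_roots {p : ℝ[X]} {S : Finset ℝ}
    (hsign : ∀ ν ∈ S, 0 < (-1) ^ #{x ∈ S | x < ν} * p.eval ν) {a : ℝ} (ha : a ∈ S) {b : ℝ}
    (hb : b ∈ S) : #{x ∈ S | a < x ∧ x ≤ b} ≤ p.roots.countP (fun y => a < y ∧ y < b) := by
  have hp : p ≠ 0 := fun h => by simpa [h] using hsign a ha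
  induction hk : #{x ∈ S | a < x ∧ x ≤ b} generalizing b with
  | zero => exact Nat.zero_le _
  | succ k ih =>
    obtain ⟨x, hx⟩ := card_pos.mp (hk ▸ k.succ_pos : 0 < #{x ∈ S | a < x ∧ x ≤ b})
    have hab : a < b := by simp only [mem_filter] at hx; linarith
    have hne : {x ∈ S | x < b}.Nonempty := ⟨a, by simp [ha, hab]⟩
    set μ := {x ∈ S | x < b}.max' hne
    obtain ⟨hμS, hμb⟩ : μ ∈ S ∧ μ < b := mem_filter.mp (max'_mem _ hne)
    have haμ : a ≤ μ := le_max' _ a (by simp [ha, hab])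
    have hgap : ∀ x ∈ S, x < b → x ≤ μ := fun x hx hxb => le_max' _ x (by simp [hx, hxb])
    have habove : {x ∈ S | a < x ∧ x ≤ b} = insert b {x ∈ S | a < x ∧ x ≤ μ} := by
      ext x
      simp only [mem_filter, mem_insert]
      constructor
      · rintro ⟨hx, hax, hxb⟩
        rcases hxb.lt_or_eq with h | h
        exacts [Or.inr ⟨hx, hax, hgap x hx h⟩, Or.inl h]
      · rintro (rfl | ⟨hx, hax, hxμ⟩)
        exacts [⟨hb, hab, le_rfl⟩, ⟨hx, hax, hxμ.trans hμb.le⟩]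
    rw [habove, card_insert_of_notMem (by simp [hμb.not_ge]), Nat.succ_inj] at hk
    obtain ⟨r, hr, hroot⟩ := exists_isRoot_mem_Ioo_of_sign hsign hμS hb hμb hgap
    calc k ≤ p.roots.countP (fun y => a < y ∧ y < μ) := ih hμS hk
      _ < p.roots.countP (fun y => a < y ∧ y < b) :=
        Multiset.countP_lt_countP_of_imp (fun y hy => ⟨hy.1, hy.2.trans hμb⟩)
          ((mem_roots hp).mpr hroot) ⟨haμ.trans_lt hr.1, hr.2⟩ fun h => h.2.not_gt hr.1

lemma volume_setOf_mul_sq_add_eq_zero {a : ℝ} (ha : a ≠ 0) (b : ℝ) :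
    volume {y : ℝ | a * y ^ 2 + b = 0} = 0 := by
  have hp : C a * X ^ 2 + C b ≠ 0 := fun h => ha (by simpa using congrArg (coeff · 2) h)
  refine Set.Finite.measure_zero ?_ _
  simpa using finite_setOfPred_isRoot hp

lemma volume_setOf_sum_mul_sq_eq_zero {n : ℕ} {q : Fin n → ℝ} (hq : q ≠ 0) :
    volume {x : Fin n → ℝ | ∑ j, q j * x j ^ 2 = 0} = 0 := by
  obtain ⟨j₀, hj₀⟩ := Function.ne_iff.mp hq
  obtain ⟨m, rfl⟩ : ∃ m, n = m + 1 := Nat.exists_eq_add_one_of_ne_zero (Fin.pos j₀).ne'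
  set B := {p : ℝ × (Fin m → ℝ) | q j₀ * p.1 ^ 2 + ∑ k, q (j₀.succAbove k) * p.2 k ^ 2 = 0}
  have hB : MeasurableSet B := measurableSet_eq_fun (by fun_prop) measurable_const
  have hpre : {x : Fin (m + 1) → ℝ | ∑ j, q j * x j ^ 2 = 0} =
      MeasurableEquiv.piFinSuccAbove (fun _ => ℝ) j₀ ⁻¹' B := by
    ext x
    simp [B, Fin.sum_univ_succAbove _ j₀, MeasurableEquiv.piFinSuccAbove_apply, Fin.removeNth]
  rw [hpre, (volume_preserving_piFinSuccAbove (fun _ => ℝ) j₀).measure_preimage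
    hB.nullMeasurableSet, Measure.volume_eq_prod, Measure.prod_apply_symm hB]
  simp [B, volume_setOf_mul_sq_add_eq_zero hj₀]

section GapPoly

variable {n : ℕ} (lam : Fin n → ℝ)

noncomputable def gapPoly (ξ : Fin n → ℝ) : ℝ[X] :=
  ∑ j, C (ξ j ^ 2) * ∏ x ∈ (univ.image lam).erase (lam j), (C x - X)

lemma PiPoly_eq_linearProd (j : Fin n) :
    PiPoly n lam j = linearProd ((univ.val.map lam).erase (lam j)) := by
  rw [PiPoly, prod_eq_multiset_prod, erase_val, ← Multiset.map_erase_of_mem _ _ (mem_univ j),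
    linearProd, Multiset.map_map]
  rfl

/- `(univ.image lam).val = (univ.val.map lam).dedup`, so the first factor is
`∏_ν (ν - t)^(m_ν - 1)`. -/
lemma IPoly_eq_linearProd_mul_gapPoly (ξ : Fin n → ℝ) :
    IPoly n lam ξ = linearProd (univ.val.map lam - (univ.val.map lam).dedup) * gapPoly lam ξ := by
  have hsplit (j : Fin n) : (univ.val.map lam).erase (lam j) =
      (univ.val.map lam - (univ.val.map lam).dedup) + ((univ.image lam).erase (lam j)).val := by
    rw [erase_val, image_val, ← Multiset.erase_add_right_pos _ (by simp),
      tsub_add_cancel_of_le (Multiset.dedup_le _)]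
  simp only [IPoly, gapPoly, PiPoly_eq_linearProd, hsplit, linearProd_add, linearProd_val, mul_sum]
  exact sum_congr rfl fun j _ => mul_left_comm _ _ _

lemma eval_gapPoly (ξ : Fin n → ℝ) {ν : ℝ} (hν : ν ∈ univ.image lam) :
    (gapPoly lam ξ).eval ν =
      (∑ j with lam j = ν, ξ j ^ 2) * ∏ x ∈ (univ.image lam).erase ν, (x - ν) := by
  simp only [gapPoly, eval_finsetSum, eval_mul, eval_C, eval_prod, eval_sub, eval_X, sum_mul,
    sum_filter]
  refine sum_congr rfl fun j _ => ?_
  split_ifs with hj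
  · rw [hj]
  · rw [prod_eq_zero (f := fun x => x - ν) (mem_erase.mpr ⟨Ne.symm hj, hν⟩) (sub_self ν),
      mul_zero, zero_mul]

lemma neg_one_pow_mul_eval_gapPoly_pos {ξ : Fin n → ℝ} (hξ : ∀ j, ξ j ≠ 0) {ν : ℝ}
    (hν : ν ∈ univ.image lam) :
    0 < (-1) ^ #{x ∈ univ.image lam | x < ν} * (gapPoly lam ξ).eval ν := by
  obtain ⟨j, -, rfl⟩ := mem_image.mp hν
  have hsum : 0 < ∑ k with lam k = lam j, ξ k ^ 2 :=
    sum_pos (fun k _ => pow_two_pos_of_ne_zero (hξ k)) ⟨j, by simp⟩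
  have hprod := neg_one_pow_mul_prod_sub_pos (notMem_erase (lam j) (univ.image lam))
  rw [filter_erase, erase_eq_of_notMem (by simp)] at hprod
  rw [eval_gapPoly lam ξ hν]
  nlinarith

lemma gapPoly_ne_zero {ξ : Fin n → ℝ} (hξ : ∀ j, ξ j ≠ 0) {ν : ℝ} (hν : ν ∈ univ.image lam) :
    gapPoly lam ξ ≠ 0 := fun h => by
  simpa [h] using neg_one_pow_mul_eval_gapPoly_pos lam hξ hν

lemma card_filter_le_countP_roots_IPoly {ξ : Fin n → ℝ} (hξ : ∀ j, ξ j ≠ 0) {ν : ℝ}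
    (hν : ν ∈ univ.image lam) (P : ℝ → Prop) [DecidablePred P]
    (hP : #{x ∈ univ.image lam | P x} ≤ (gapPoly lam ξ).roots.countP P) :
    #{j | P (lam j)} ≤ (IPoly n lam ξ).roots.countP P := by
  have hdedup : (univ.val.map lam).dedup.countP P = #{x ∈ univ.image lam | P x} := by
    rw [card_def, filter_val, image_val, Multiset.countP_eq_card_filter]
  have hall : (univ.val.map lam).countP P = #{j | P (lam j)} := by
    rw [Multiset.countP_map]; rfl
  have hle := Multiset.countP_le_of_le P (Multiset.dedup_le (univ.val.map lam))
  rw [IPoly_eq_linearProd_mul_gapPoly, roots_mul (mul_ne_zero (linearProd_ne_zero _)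
    (gapPoly_ne_zero lam hξ hν)), roots_linearProd, Multiset.countP_add,
    Multiset.countP_sub (Multiset.dedup_le _)]
  omega

lemma card_filter_lt_le_countP_roots_IPoly {ξ : Fin n → ℝ} (hξ : ∀ j, ξ j ≠ 0) {d : ℝ}
    (hd : d ∈ univ.image lam) : #{j | lam j < d} ≤ (IPoly n lam ξ).roots.countP (· < d) := by
  refine card_filter_le_countP_roots_IPoly lam hξ hd (· < d) ?_
  rw [card_filter_lt_eq_card_filter_Ioc_min' hd]
  exact (card_filter_Ioc_le_countP_roots (fun ν hν => neg_one_pow_mul_eval_gapPoly_pos lam hξ hν)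
    (min'_mem _ _) hd).trans (Multiset.countP_le_countP_of_imp fun y hy => hy.2)

lemma card_filter_gt_le_countP_roots_IPoly {ξ : Fin n → ℝ} (hξ : ∀ j, ξ j ≠ 0) {c : ℝ}
    (hc : c ∈ univ.image lam) : #{j | c < lam j} ≤ (IPoly n lam ξ).roots.countP (c < ·) := by
  refine card_filter_le_countP_roots_IPoly lam hξ hc (c < ·) ?_
  set S := univ.image lam
  have hb : S.max' ⟨c, hc⟩ ∈ S := max'_mem _ _
  have hcard : #{x ∈ S | c < x} = #{x ∈ S | c < x ∧ x ≤ S.max' ⟨c, hc⟩} :=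
    congrArg card (filter_congr fun x hx => (and_iff_left (le_max' S x hx)).symm)
  rw [hcard]
  exact (card_filter_Ioc_le_countP_roots (fun ν hν => neg_one_pow_mul_eval_gapPoly_pos lam hξ hν)
    hc hb).trans (Multiset.countP_le_countP_of_imp fun y hy => hy.1)

lemma natDegree_IPoly_le (ξ : Fin n → ℝ) : (IPoly n lam ξ).natDegree ≤ n - 1 := by
  refine natDegree_sum_le_of_forall_le _ _ fun j _ => (natDegree_C_mul_le _ _).trans ?_
  rw [PiPoly]
  refine (natDegree_prod_le _ _).trans ?_
  calc ∑ k ∈ univ.erase j, (C (lam k) - X).natDegree ≤ ∑ k ∈ univ.erase j, 1 := by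
        gcongr; compute_degree
    _ = n - 1 := by simp

end GapPoly

section Interlacing

variable {n : ℕ} {lam : Fin n → ℝ}

lemma Monotone.filter_lt_eq_Iic (hlam : Monotone lam) {a b : Fin n} (hab : (a : ℕ) + 1 = b)
    (hlt : lam a < lam b) : ({j | lam j < lam b} : Finset (Fin n)) = Iic a := by
  ext j
  simp only [mem_filter, mem_univ, true_and, mem_Iic]
  refine ⟨fun h => ?_, fun h => (hlam h).trans_lt hlt⟩
  by_contra! hj
  exact h.not_ge (hlam (Fin.le_def.mpr (hab ▸ hj)))

lemma Monotone.filter_gt_eq_Ici (hlam : Monotone lam) {a b : Fin n} (hab : (a : ℕ) + 1 = b)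
    (hlt : lam a < lam b) : ({j | lam a < lam j} : Finset (Fin n)) = Ici b := by
  ext j
  simp only [mem_filter, mem_univ, true_and, mem_Ici]
  refine ⟨fun h => ?_, fun h => hlt.trans_le (hlam h)⟩
  by_contra! hj
  exact h.not_ge (hlam (Fin.le_def.mpr (by have := Fin.lt_def.mp hj; omega)))

lemma Monotone.ne_of_mem_Ioo (hlam : Monotone lam) {a b : Fin n} (hab : (a : ℕ) + 1 = b)
    {τ : ℝ} (hτ : τ ∈ Set.Ioo (lam a) (lam b)) (j : Fin n) : lam j ≠ τ := by
  rintro rfl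
  rcases le_or_gt j a with h | h
  · exact (hlam h).not_gt hτ.1
  · exact (hlam (Fin.le_def.mpr (hab ▸ h))).not_gt hτ.2

theorem sort_roots_IPoly_getD_mem_Ioo (hlam : Monotone lam) {a b : Fin n} (hab : (a : ℕ) + 1 = b)
    (hlt : lam a < lam b) {ξ : Fin n → ℝ} (hξ : ∀ j, ξ j ≠ 0) :
    ((IPoly n lam ξ).roots.sort (· ≤ ·)).getD a 0 ∈ (IPoly n lam ξ).roots ∧
      ((IPoly n lam ξ).roots.sort (· ≤ ·)).getD a 0 ∈ Set.Ioo (lam a) (lam b) := by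
  refine Multiset.sort_getD_mem_Ioo ?_ ?_
  · have hgt := card_filter_gt_le_countP_roots_IPoly lam hξ (mem_image_of_mem lam (mem_univ a))
    rw [hlam.filter_gt_eq_Ici hab hlt, Fin.card_Ici] at hgt
    have hcard := (card_roots' _).trans (natDegree_IPoly_le lam ξ)
    have hsplit := Multiset.card_eq_countP_add_countP (· ≤ lam a) (IPoly n lam ξ).roots
    simp only [not_le] at hsplit
    omega
  · have hlt' := card_filter_lt_le_countP_roots_IPoly lam hξ (mem_image_of_mem lam (mem_univ b))
    rwa [hlam.filter_lt_eq_Iic hab hlt, Fin.card_Iic] at hlt'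

end Interlacing

lemma volume_setOf_eval_IPoly_eq_zero {n : ℕ} (lam : Fin n → ℝ) (hn : n ≠ 0) {τ : ℝ}
    (hτ : ∀ j, lam j ≠ τ) : volume {ξ : Fin n → ℝ | (IPoly n lam ξ).eval τ = 0} = 0 := by
  have hq : (fun j => (PiPoly n lam j).eval τ) ≠ 0 := by
    intro h
    have := congrFun h ⟨0, Nat.pos_of_ne_zero hn⟩
    simp [PiPoly, eval_prod, prod_eq_zero_iff, sub_eq_zero, hτ] at this
  convert volume_setOf_sum_mul_sq_eq_zero hq using 3
  simp [IPoly, eval_finsetSum, mul_comm]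

theorem stmt2 (n : ℕ) (lam : Fin n → ℝ) (hlam : Monotone lam)
    (i : ℕ) (hi : i + 1 < n) (hlt : lam ⟨i, by omega⟩ < lam ⟨i + 1, hi⟩) (τ : ℝ) :
    volume {ξ : Fin n → ℝ |
      ξ ≠ 0 ∧ ((IPoly n lam ξ).roots.sort (· ≤ ·)).getD i 0 = τ} = 0 := by
  set a : Fin n := ⟨i, Nat.lt_of_succ_lt hi⟩
  set b : Fin n := ⟨i + 1, hi⟩
  have hab : (a : ℕ) + 1 = b := rfl
  set gap := Set.Ioo (lam a) (lam b)
  have hsub : {ξ : Fin n → ℝ | ξ ≠ 0 ∧ ((IPoly n lam ξ).roots.sort (· ≤ ·)).getD i 0 = τ} ⊆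
      (⋃ j, {ξ | ξ j = 0}) ∪ {ξ | τ ∈ gap ∧ (IPoly n lam ξ).eval τ = 0} := by
    rintro ξ ⟨-, rfl⟩
    by_cases hξ : ∃ j, ξ j = 0
    · exact Or.inl (Set.mem_iUnion.mpr hξ)
    · obtain ⟨hroot, hmem⟩ := sort_roots_IPoly_getD_mem_Ioo hlam hab hlt (not_exists.mp hξ)
      exact Or.inr ⟨hmem, isRoot_of_mem_roots hroot⟩
  refine measure_mono_null hsub (measure_union_null (measure_iUnion_null fun j => ?_) ?_)
  · simpa [volume_pi] using Measure.pi_hyperplane (fun _ => volume) j 0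
  · by_cases hτ : τ ∈ gap
    · exact measure_mono_null (fun ξ hξ => hξ.2)
        (volume_setOf_eval_IPoly_eq_zero lam (by omega) (hlam.ne_of_mem_Ioo hab hτ))
    · simp [hτ]
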